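/- arXiv:1606.02404 — 4 statements merged into one kernel-verified Lean document; each statement's English description precedes it below -/
import Mathlib

section
/- Let C = {C_1,...,C_k} be a center-based clustering of a finite set X in a metric space with centers μ_1,...,μ_k satisfying the γ-margin property (for all i, all x ∈ C_i and y ∈ X \ C_i, γ·d(x,μ_i) < d(y,μ_i)). Let r(C_i) = max_{x∈C_i} d(x,μ_i), and suppose μ_i' satisfies d(μ_i,μ_i') ≤ r(C_i)·ε. If γ ≥ 1 + 2ε, then for every x ∈ C_i and y ∈ X \ C_i we have d(x,μ_i') < d(y,μ_i'). -/
/-- γ-margin separation lemma with a perturbed center. -/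
theorem stmt0 {M : Type*} [MetricSpace M] (X : Finset M) {k : ℕ}
    (C : Fin k → Set M) (μ : Fin k → M)
    (hCX : ∀ i, C i ⊆ (X : Set M))
    (γ ε : ℝ) (hε : 0 < ε) (hγ : γ ≥ 1 + 2 * ε)
    (margin : ∀ i, ∀ x ∈ C i, ∀ y ∈ (X : Set M), y ∉ C i →
      γ * dist x (μ i) < dist y (μ i))
    (r : Fin k → ℝ)
    (hr_ub : ∀ i, ∀ x ∈ C i, dist x (μ i) ≤ r i)
    (hr_mem : ∀ i, ∃ x ∈ C i, dist x (μ i) = r i)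
    (μ' : Fin k → M) (hμ' : ∀ i, dist (μ i) (μ' i) ≤ r i * ε) :
    ∀ i, ∀ x ∈ C i, ∀ y ∈ (X : Set M), y ∉ C i →
      dist x (μ' i) < dist y (μ' i) := by
  intro i x hx y hy hyC
  obtain ⟨x0, hx0, hx0r⟩ := hr_mem i
  have hr0 : 0 ≤ r i := hx0r ▸ dist_nonneg
  have hmar : γ * r i < dist y (μ i) := hx0r ▸ margin i x0 hx0 y hy hyC
  have h1 : dist x (μ' i) ≤ r i + r i * ε :=
    le_trans (dist_triangle x (μ i) (μ' i))
      (add_le_add (hr_ub i x hx) (hμ' i))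
  have h2 : dist y (μ i) - r i * ε ≤ dist y (μ' i) := by
    have := dist_triangle y (μ' i) (μ i)
    have h' : dist (μ' i) (μ i) ≤ r i * ε := by rw [dist_comm]; exact hμ' i
    linarith
  have h3 : r i + r i * ε < dist y (μ i) - r i * ε := by nlinarith
  linarith
end

section
/- Let C* = {C_1,...,C_k} be a center-based clustering of a finite set X in a metric space with centers c_1,...,c_k chosen from X, satisfying the γ-margin property with γ > 2. Then for any i ≠ j, any p, p' ∈ C_i, and any q ∈ C_j: (a) d(p, c_i) < (1/(γ−1))·d(p,q), hence d(p,c_i) < d(p,q); (b) d(p, c_i) < d(q, c_i); and (c) d(p, c_i) < d(p', q). -/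
/-- the three key inequalities for γ-margin clusterings with
centers from the data, γ > 2. -/
theorem stmt6 {M : Type*} [MetricSpace M] (X : Finset M) {k : ℕ}
    (C : Fin k → Set M) (c : Fin k → M)
    (hc : ∀ i, c i ∈ X) (hCX : ∀ i, C i ⊆ (X : Set M))
    (hdisj : ∀ i j, i ≠ j → Disjoint (C i) (C j))
    (γ : ℝ) (hγ : 2 < γ)
    (margin : ∀ i, ∀ x ∈ C i, ∀ y ∈ (X : Set M), y ∉ C i →
      γ * dist x (c i) < dist y (c i))
    (i j : Fin k) (hij : i ≠ j)
    (p p' q : M) (hp : p ∈ C i) (hp' : p' ∈ C i) (hq : q ∈ C j) :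
    dist p (c i) < (1 / (γ - 1)) * dist p q ∧
    dist p (c i) < dist p q ∧
    dist p (c i) < dist q (c i) ∧
    dist p (c i) < dist p' q := by
  have hqX : q ∈ (X : Set M) := hCX j hq
  have hqnot : q ∉ C i := fun h => (hdisj i j hij).ne_of_mem h hq rfl
  have m1 := margin i p hp q hqX hqnot
  have m2 := margin i p' hp' q hqX hqnot
  have t1 : dist q (c i) ≤ dist q p + dist p (c i) := dist_triangle q p (c i)
  have t2 : dist q (c i) ≤ dist q p' + dist p' (c i) := dist_triangle q p' (c i)
  have hsym : dist q p = dist p q := dist_comm q p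
  have hsym' : dist q p' = dist p' q := dist_comm q p'
  have ha : (0:ℝ) ≤ dist p (c i) := dist_nonneg
  have hb : (0:ℝ) ≤ dist p' (c i) := dist_nonneg
  have hγ1 : (0:ℝ) < γ - 1 := by linarith
  refine ⟨?_, ?_, ?_, ?_⟩
  · rw [div_mul_eq_mul_div, lt_div_iff₀ hγ1]
    nlinarith
  · nlinarith
  · nlinarith
  · nlinarith
end

section
/- Let C be a clustering of a finite metric space satisfying the γ-margin property with centers μ_i and let r_i = max_{x∈C_i} d(x, μ_i). If γ > 2, then for any i ≠ j, any p' ∈ C_i and q ∈ C_j, d(p', q) > (γ − 1)·r_i; in particular, since every point of C_i is within r_i of μ_i, the diameter-style bound d(p,μ_i) < d(p',q) holds for all p, p' ∈ C_i, q ∉ C_i. -/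
/-- cross-cluster distances exceed (γ−1) times the cluster radius
when γ > 2, giving d(p, μ_i) < d(p', q). -/
theorem stmt7 {M : Type*} [MetricSpace M] (X : Finset M) {k : ℕ}
    (C : Fin k → Set M) (μ : Fin k → M)
    (hCX : ∀ i, C i ⊆ (X : Set M))
    (hdisj : ∀ i j, i ≠ j → Disjoint (C i) (C j))
    (γ : ℝ) (hγ : 2 < γ)
    (margin : ∀ i, ∀ x ∈ C i, ∀ y ∈ (X : Set M), y ∉ C i →
      γ * dist x (μ i) < dist y (μ i))
    (r : Fin k → ℝ)
    (hr_ub : ∀ i, ∀ x ∈ C i, dist x (μ i) ≤ r i)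
    (hr_mem : ∀ i, ∃ x ∈ C i, dist x (μ i) = r i)
    (i j : Fin k) (hij : i ≠ j)
    (p p' q : M) (hp : p ∈ C i) (hp' : p' ∈ C i) (hq : q ∈ C j) :
    dist p' q > (γ - 1) * r i ∧ dist p (μ i) < dist p' q := by
  obtain ⟨x, hx, hxr⟩ := hr_mem i
  have hqX : q ∈ (X : Set M) := hCX j hq
  have hqni : q ∉ C i := fun h => (hdisj i j hij).ne_of_mem h hq rfl
  have h1 : γ * r i < dist q (μ i) := hxr ▸ margin i x hx q hqX hqni
  have hr0 : 0 ≤ r i := hxr ▸ dist_nonneg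
  have hp'r : dist p' (μ i) ≤ r i := hr_ub i p' hp'
  have htri : dist q (μ i) ≤ dist p' q + dist p' (μ i) := by
    rw [dist_comm p' q]; exact dist_triangle q p' (μ i)
  have hmain : dist p' q > (γ - 1) * r i := by nlinarith
  refine ⟨hmain, ?_⟩
  have : dist p (μ i) ≤ r i := hr_ub i p hp
  nlinarith
end

section
/- A row of the grid construction clustered as an A-clustering costs (6m+3)w − α, while the same row clustered as a B-clustering costs (6m+3)w, where α = d/w − 1/(2w³) with d = √6, the row consists of points s, r_1,...,r_{6m+1}, f on a line with consecutive gaps d, 2, 2, ..., 2, d−ε (ε = 1/w²), each point having weight w, the A-clustering is {{s},{r_1,r_2},{r_3,r_4},...,{r_{6m+1},f}} and the B-clustering is {{s,r_1},{r_2,r_3},...,{r_{6m},r_{6m+1}},{f}}. -/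
/-- cost of an A-clustering versus a B-clustering of a row.
A row consists of weighted points on a line with consecutive gaps
`d, 2, 2, …, 2, d−ε` (with `3m` gaps of size 2 paired in the A-clustering);
each cluster of two points at distance `t`, each of weight `w`, costs `w·t²/2`.
The A-clustering (3m pairs at gap 2 plus the pair `{r_{6m+1}, f}` at gap `d−ε`)
costs `(6m+3)w − α`, while the B-clustering (the pair `{s, r₁}` at gap `d` plus
`3m` pairs at gap 2) costs `(6m+3)w`, where `α = d/w − 1/(2w³)`. -/
theorem stmt16 (m : ℕ) (w : ℝ) (hw : 0 < w) :
    ∀ d ε α : ℝ, d = Real.sqrt 6 → ε = 1 / w ^ 2 → α = d / w - 1 / (2 * w ^ 3) →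
    ∀ pairCost : ℝ → ℝ, (pairCost = fun t => w * t ^ 2 / 2) →
    (3 * (m : ℝ)) * pairCost 2 + pairCost (d - ε) = (6 * (m : ℝ) + 3) * w - α ∧
    pairCost d + (3 * (m : ℝ)) * pairCost 2 = (6 * (m : ℝ) + 3) * w := by
  intro d ε α hd hε hα pc hpc
  have hd2 : d ^ 2 = 6 := by
    rw [hd, sq]; exact Real.mul_self_sqrt (by norm_num)
  subst hpc hε hα
  have hw' : w ≠ 0 := ne_of_gt hw
  constructor <;> simp only [] <;> field_simp <;> ring_nf <;> rw [hd2] <;> ring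
end
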